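/- Let 1 ≤ p ≤ 2 and let x_1,…,x_n, y_1,…,y_n ∈ ℓ_p. Then Σ_{i=1}^n Σ_{j=1}^n ( ‖x_i − x_j‖_p^p + ‖y_i − y_j‖_p^p ) ≤ 2 · Σ_{i=1}^n Σ_{j=1}^n ‖x_i − y_j‖_p^p. (That is, ℓ_p has generalized roundness p for 1 ≤ p ≤ 2.) -/

import Mathlib

/-!
The functions `f` satisfying `HasRoundnessInequality f` form a convex cone that is closed under
rescaling the argument and under integration. It contains `1 - cos`, the defect being
`|Σ e^{i aᵢ} - Σ e^{i bᵢ}|²`, and `t ↦ t²`, the defect being `2 (Σ aᵢ - Σ bᵢ)²`. For `0 < p < 2`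
the substitution `u = |t| s` gives `|t|^p = K_p⁻¹ ∫₀^∞ (1 - cos (t s)) s^(-1-p) ds` with `K_p > 0`,
so the cone contains `|·|^p` for all `0 < p ≤ 2`. Since `‖x‖_p^p = Σₖ |xₖ|^p`, the inequality in
`ℓ_p` is the sum over the coordinates of the scalar one.
-/

open scoped ENNReal
open Real MeasureTheory Set

def HasRoundnessInequality (f : ℝ → ℝ) : Prop :=
  ∀ (n : ℕ) (a b : Fin n → ℝ),
    ∑ i, ∑ j, (f (a i - a j) + f (b i - b j)) ≤ 2 * ∑ i, ∑ j, f (a i - b j)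

namespace HasRoundnessInequality

variable {f : ℝ → ℝ}

theorem const_mul (hf : HasRoundnessInequality f) {c : ℝ} (hc : 0 ≤ c) :
    HasRoundnessInequality fun t => c * f t := by
  intro n a b
  simpa only [← mul_add, ← Finset.mul_sum, mul_left_comm (2 : ℝ)] using
    mul_le_mul_of_nonneg_left (hf n a b) hc

theorem comp_mul_right (hf : HasRoundnessInequality f) (s : ℝ) :
    HasRoundnessInequality fun t => f (t * s) := by
  intro n a b
  simpa only [sub_mul] using hf n (fun i => a i * s) (fun i => b i * s)

theorem integral {α : Type*} [MeasurableSpace α] {μ : Measure α} {g : α → ℝ → ℝ}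
    (hint : ∀ t, Integrable (fun s => g s t) μ) (hg : ∀ᵐ s ∂μ, HasRoundnessInequality (g s)) :
    HasRoundnessInequality fun t => ∫ s, g s t ∂μ := by
  intro n a b
  have hint₂ : ∀ u v : Fin n → ℝ, ∀ i ∈ Finset.univ,
      Integrable (fun s => ∑ j, g s (u i - v j)) μ :=
    fun u v i _ => integrable_finsetSum _ fun j _ => hint _
  calc ∑ i, ∑ j, ((∫ s, g s (a i - a j) ∂μ) + ∫ s, g s (b i - b j) ∂μ)
      = ∫ s, ∑ i, ∑ j, (g s (a i - a j) + g s (b i - b j)) ∂μ := by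
        simp only [Finset.sum_add_distrib]
        rw [integral_add (integrable_finsetSum _ (hint₂ a a))
          (integrable_finsetSum _ (hint₂ b b)),
          integral_finsetSum _ (hint₂ a a), integral_finsetSum _ (hint₂ b b)]
        simp only [integral_finsetSum _ fun j _ => hint _]
    _ ≤ ∫ s, 2 * ∑ i, ∑ j, g s (a i - b j) ∂μ := by
        refine integral_mono_ae ?_ ?_ (hg.mono fun s hs => hs n a b)
        · simp only [Finset.sum_add_distrib]
          exact (integrable_finsetSum _ (hint₂ a a)).add (integrable_finsetSum _ (hint₂ b b))
        · exact (integrable_finsetSum _ (hint₂ a b)).const_mul 2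
    _ = 2 * ∑ i, ∑ j, ∫ s, g s (a i - b j) ∂μ := by
        rw [integral_const_mul, integral_finsetSum _ (hint₂ a b)]
        simp only [integral_finsetSum _ fun j _ => hint _]

end HasRoundnessInequality

theorem Real.sum_sum_cos_sub {n : ℕ} (u v : Fin n → ℝ) :
    ∑ i, ∑ j, cos (u i - v j) =
      (∑ i, cos (u i)) * (∑ j, cos (v j)) + (∑ i, sin (u i)) * (∑ j, sin (v j)) := by
  simp only [Finset.sum_mul_sum, cos_sub, Finset.sum_add_distrib]

theorem hasRoundnessInequality_one_sub_cos : HasRoundnessInequality fun t => 1 - cos t := by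
  intro n a b
  simp only [Finset.sum_add_distrib, Finset.sum_sub_distrib, Finset.sum_const, Finset.card_univ,
    Fintype.card_fin, nsmul_eq_mul, sum_sum_cos_sub]
  nlinarith [sq_nonneg ((∑ i, cos (a i)) - ∑ i, cos (b i)),
    sq_nonneg ((∑ i, sin (a i)) - ∑ i, sin (b i))]

theorem hasRoundnessInequality_sq : HasRoundnessInequality fun t => t ^ 2 := by
  intro n a b
  simp only [sub_sq, Finset.sum_add_distrib, Finset.sum_sub_distrib, ← Finset.sum_mul,
    ← Finset.mul_sum, Finset.sum_const, Finset.card_univ, Fintype.card_fin, nsmul_eq_mul]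
  nlinarith [sq_nonneg ((∑ i, a i) - ∑ i, b i)]

noncomputable def rpowCosConst (p : ℝ) : ℝ := ∫ u in Ioi 0, (1 - cos u) * u ^ (-1 - p)

theorem integrableOn_one_sub_cos_mul_rpow {p : ℝ} (hp0 : 0 < p) (hp2 : p < 2) (c : ℝ) :
    IntegrableOn (fun s => (1 - cos (c * s)) * s ^ (-1 - p)) (Ioi 0) := by
  have hmeas : AEStronglyMeasurable (fun s : ℝ => (1 - cos (c * s)) * s ^ (-1 - p)) :=
    (by fun_prop : Measurable fun s : ℝ => (1 - cos (c * s)) * s ^ (-1 - p)).aestronglyMeasurable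
  have hnorm : ∀ s : ℝ, 0 < s → ‖(1 - cos (c * s)) * s ^ (-1 - p)‖ =
      (1 - cos (c * s)) * s ^ (-1 - p) := fun s hs =>
    Real.norm_of_nonneg (mul_nonneg (sub_nonneg.2 (cos_le_one _)) (rpow_nonneg hs.le _))
  have hsmall : IntegrableOn (fun s => (1 - cos (c * s)) * s ^ (-1 - p)) (Ioo 0 1) := by
    refine (((intervalIntegral.integrableOn_Ioo_rpow_iff one_pos).2
      (by linarith : -1 < 1 - p)).const_mul (c ^ 2 / 2)).mono' hmeas.restrict ?_
    refine ae_restrict_of_forall_mem measurableSet_Ioo fun s hs => ?_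
    have hs0 : 0 < s := hs.1
    rw [hnorm s hs0]
    calc (1 - cos (c * s)) * s ^ (-1 - p) ≤ (c * s) ^ 2 / 2 * s ^ (-1 - p) := by
          gcongr
          linarith [one_sub_sq_div_two_le_cos (x := c * s)]
      _ = c ^ 2 / 2 * (s ^ (2 : ℝ) * s ^ (-1 - p)) := by
          rw [rpow_two]
          ring
      _ = c ^ 2 / 2 * s ^ (1 - p) := by
          rw [← rpow_add hs0]
          ring_nf
  have hlarge : IntegrableOn (fun s => (1 - cos (c * s)) * s ^ (-1 - p)) (Ici 1) := by
    refine (((integrableOn_Ici_iff_integrableOn_Ioi (f := fun s : ℝ => s ^ (-1 - p))).2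
      (integrableOn_Ioi_rpow_of_lt (by linarith : -1 - p < -1) one_pos)).const_mul 2).mono'
      hmeas.restrict ?_
    refine ae_restrict_of_forall_mem measurableSet_Ici fun s (hs : 1 ≤ s) => ?_
    rw [hnorm s (one_pos.trans_le hs)]
    gcongr
    linarith [neg_one_le_cos (c * s)]
  rw [← Ioo_union_Ici_eq_Ioi one_pos]
  exact hsmall.union hlarge

theorem integral_one_sub_cos_mul_rpow {p : ℝ} (hp : p ≠ 0) (t : ℝ) :
    ∫ s in Ioi 0, (1 - cos (t * s)) * s ^ (-1 - p) = |t| ^ p * rpowCosConst p := by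
  rcases eq_or_ne t 0 with rfl | ht
  · simp [zero_rpow hp]
  have ht' : 0 < |t| := abs_pos.2 ht
  calc ∫ s in Ioi 0, (1 - cos (t * s)) * s ^ (-1 - p)
      = ∫ s in Ioi 0, |t| ^ (1 + p) * ((1 - cos (|t| * s)) * (|t| * s) ^ (-1 - p)) := by
        refine setIntegral_congr_fun measurableSet_Ioi fun s (hs : 0 < s) => ?_
        rw [← cos_abs (t * s), abs_mul, abs_of_pos hs, mul_rpow ht'.le hs.le,
          mul_left_comm, ← mul_assoc (|t| ^ (1 + p)), ← rpow_add ht']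
        ring_nf
        simp
    _ = |t| ^ p * rpowCosConst p := by
        rw [integral_const_mul,
          integral_comp_mul_left_Ioi (fun u => (1 - cos u) * u ^ (-1 - p)) _ ht', mul_zero,
          smul_eq_mul, ← mul_assoc, ← rpow_neg_one, ← rpow_add ht', rpowCosConst]
        ring_nf

theorem rpowCosConst_pos {p : ℝ} (hp0 : 0 < p) (hp2 : p < 2) : 0 < rpowCosConst p := by
  have hint := integrableOn_one_sub_cos_mul_rpow hp0 hp2 1
  simp only [one_mul] at hint
  rw [rpowCosConst, setIntegral_pos_iff_support_of_nonneg_ae _ hint]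
  · have hsupp : Ioo 0 (2 * π) ⊆
        Function.support (fun u => (1 - cos u) * u ^ (-1 - p)) ∩ Ioi 0 := by
      refine fun u hu => ⟨?_, hu.1⟩
      have hcos : cos u ≠ 1 := by
        rw [Ne, cos_eq_one_iff_of_lt_of_lt (by linarith [hu.1, pi_pos]) hu.2]
        exact hu.1.ne'
      exact mul_ne_zero (sub_ne_zero.2 hcos.symm) (rpow_pos_of_pos hu.1 _).ne'
    refine lt_of_lt_of_le ?_ (measure_mono hsupp)
    simp [pi_pos]
  · exact ae_restrict_of_forall_mem measurableSet_Ioi fun u (hu : 0 < u) =>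
      mul_nonneg (sub_nonneg.2 (cos_le_one u)) (rpow_nonneg hu.le _)

theorem hasRoundnessInequality_abs_rpow {p : ℝ} (hp0 : 0 < p) (hp2 : p ≤ 2) :
    HasRoundnessInequality fun t => |t| ^ p := by
  rcases hp2.lt_or_eq with hp2 | rfl
  · have hK := rpowCosConst_pos hp0 hp2
    have hrepr : (fun t => |t| ^ p) = fun t =>
        (rpowCosConst p)⁻¹ * ∫ s in Ioi 0, (1 - cos (t * s)) * s ^ (-1 - p) := by
      ext t
      rw [integral_one_sub_cos_mul_rpow hp0.ne', mul_comm, mul_assoc, mul_inv_cancel₀ hK.ne',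
        mul_one]
    rw [hrepr]
    refine HasRoundnessInequality.const_mul ?_ (inv_nonneg.2 hK.le)
    refine HasRoundnessInequality.integral (integrableOn_one_sub_cos_mul_rpow hp0 hp2) ?_
    refine ae_restrict_of_forall_mem measurableSet_Ioi fun s (hs : 0 < s) => ?_
    simpa only [mul_comm] using
      (hasRoundnessInequality_one_sub_cos.comp_mul_right s).const_mul (rpow_nonneg hs.le (-1 - p))
  · simpa only [rpow_two, sq_abs] using hasRoundnessInequality_sq

namespace lp

variable {ι : Type*} {p : ℝ}

theorem norm_rpow_eq_tsum_abs_rpow (hp : 0 < p) (f : lp (fun _ : ι => ℝ) (ENNReal.ofReal p)) :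
    ‖f‖ ^ p = ∑' k, |f k| ^ p := by
  have hp' : (ENNReal.ofReal p).toReal = p := ENNReal.toReal_ofReal hp.le
  simpa [hp'] using lp.norm_rpow_eq_tsum (hp'.symm ▸ hp) f

theorem summable_abs_rpow (hp : 0 < p) (f : lp (fun _ : ι => ℝ) (ENNReal.ofReal p)) :
    Summable fun k => |f k| ^ p := by
  have hp' : (ENNReal.ofReal p).toReal = p := ENNReal.toReal_ofReal hp.le
  simpa [hp'] using (lp.memℓp f).summable (hp'.symm ▸ hp)

theorem sum_sum_norm_sub_rpow_le (hp : 0 < p) (hf : HasRoundnessInequality fun t => |t| ^ p)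
    {n : ℕ} (x y : Fin n → lp (fun _ : ι => ℝ) (ENNReal.ofReal p)) :
    ∑ i, ∑ j, (‖x i - x j‖ ^ p + ‖y i - y j‖ ^ p) ≤ 2 * ∑ i, ∑ j, ‖x i - y j‖ ^ p := by
  have hsum := summable_abs_rpow hp (ι := ι)
  have htsum_sum_sum : ∀ g : Fin n → Fin n → ι → ℝ, (∀ i j, Summable (g i j)) →
      ∑' k, ∑ i, ∑ j, g i j k = ∑ i, ∑ j, ∑' k, g i j k := fun g hg => by
    rw [Summable.tsum_finsetSum fun i _ => summable_sum fun j _ => hg i j]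
    simp only [Summable.tsum_finsetSum fun j _ => hg _ j]
  simp only [norm_rpow_eq_tsum_abs_rpow hp, ← Summable.tsum_add (hsum _) (hsum _)]
  rw [← htsum_sum_sum _ fun i j => (hsum _).add (hsum _), ← htsum_sum_sum _ fun i j => hsum _,
    ← tsum_mul_left]
  refine Summable.tsum_le_tsum (fun k => ?_) (summable_sum fun i _ => summable_sum fun j _ =>
    (hsum _).add (hsum _)) ((summable_sum fun i _ => summable_sum fun j _ => hsum _).mul_left 2)
  simpa only [coeFn_sub, Pi.sub_apply] using hf n (fun i => x i k) (fun i => y i k)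

end lp

theorem stmt10 (p : ℝ) (hp1 : 1 ≤ p) (hp2 : p ≤ 2) (n : ℕ)
    (x y : Fin n → lp (fun _ : ℕ => ℝ) (ENNReal.ofReal p)) :
    ∑ i, ∑ j, (‖x i - x j‖ ^ p + ‖y i - y j‖ ^ p) ≤
      2 * ∑ i, ∑ j, ‖x i - y j‖ ^ p := by
  have hp0 : 0 < p := one_pos.trans_le hp1
  exact lp.sum_sum_norm_sub_rpow_le hp0 (hasRoundnessInequality_abs_rpow hp0 hp2) x y
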